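/- arXiv:2305.06067 — 2 statements merged into one kernel-verified Lean document; each statement's English description precedes it below -/
import Mathlib

section
/- Let x ≥ y ≥ 0 be reals, not both zero, and set D = √(x² + y²). Then √2(x + 1) + 1 + (x + 1 − y) ≤ 4.5·D + (√2 + 2). -/
theorem stmt11 (x y : ℝ) (hy : 0 ≤ y) (hxy : y ≤ x) (hne : ¬ (x = 0 ∧ y = 0)) :
    Real.sqrt 2 * (x + 1) + 1 + (x + 1 - y)
      ≤ 4.5 * Real.sqrt (x ^ 2 + y ^ 2) + (Real.sqrt 2 + 2) := by
  have hx : 0 ≤ x := le_trans hy hxy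
  have hD : x ≤ Real.sqrt (x ^ 2 + y ^ 2) := by
    have : x = Real.sqrt (x ^ 2) := by rw [Real.sqrt_sq hx]
    rw [this]
    exact Real.sqrt_le_sqrt (by nlinarith)
  have h2 : Real.sqrt 2 ≤ 1.5 := by
    rw [show (1.5 : ℝ) = Real.sqrt (1.5 ^ 2) by rw [Real.sqrt_sq]; norm_num]
    exact Real.sqrt_le_sqrt (by norm_num)
  nlinarith [Real.sqrt_nonneg (x ^ 2 + y ^ 2)]
end

section
/- Let x ≥ y ≥ 0 be reals, not both zero, and set D = √(x² + y²). Then √2(x + 1) + (x + 1 − y) + (2x + 1) ≤ 4.5·D + (√2 + 2). (Note (3 + √2) < 4.5.) -/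
theorem stmt12 (x y : ℝ) (hy : 0 ≤ y) (hxy : y ≤ x) (hne : ¬ (x = 0 ∧ y = 0)) :
    Real.sqrt 2 * (x + 1) + (x + 1 - y) + (2 * x + 1)
      ≤ 4.5 * Real.sqrt (x ^ 2 + y ^ 2) + (Real.sqrt 2 + 2) := by
  have hx : 0 ≤ x := hy.trans hxy
  have hs2 : Real.sqrt 2 ≤ 1.5 := by
    nlinarith [Real.sq_sqrt (by norm_num : (0:ℝ) ≤ 2), Real.sqrt_nonneg 2]
  have hD : x ≤ Real.sqrt (x ^ 2 + y ^ 2) := by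
    nlinarith [Real.sq_sqrt (by positivity : (0:ℝ) ≤ x ^ 2 + y ^ 2), Real.sqrt_nonneg (x ^ 2 + y ^ 2)]
  nlinarith [Real.sqrt_nonneg 2]
end
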